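/- Let A ∈ B(H) have Cartesian decomposition A = P + iQ, where P and Q are selfadjoint. Then the numerical radius satisfies w(A) ≤ (1/2) · ( ‖P‖ + ‖Q‖ + sqrt( (‖P‖ − ‖Q‖)² + 4·‖ |P|·|Q| ‖ ) ); equivalently, for every unit vector x ∈ H, |⟨Ax, x⟩| is bounded by this quantity. -/

import Mathlib

/-!
For a unit vector `x` put `a = ‖P x‖`, `b = ‖Q x‖` and `t = a² + b²`. Since `⟪P x, x⟫` and
`⟪Q x, x⟫` are real, `|⟪A x, x⟫|² ≤ t = ⟪(P² + Q²) x, x⟫ ≤ ‖(P² + Q²) x‖`. Expanding the square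
of the last norm gives `t² ≤ ‖P‖² a² + 2 ‖P Q‖ a b + ‖Q‖² b²`, which is at most `μ t` for the
larger eigenvalue `μ` of `!![‖P‖², ‖P Q‖; ‖P Q‖, ‖Q‖²]`; hence `t ≤ μ`, and `μ` is at most the
square of the claimed bound. Finally `‖P Q‖ = ‖|P| |Q|‖`, since in a C⋆-algebra `‖a b‖` depends
only on `a⋆ a` and `b b⋆`.
-/

open scoped InnerProductSpace
open ContinuousLinearMap

/-- The absolute value `|A| = (A^*A)^{1/2}` of a bounded operator, via the
continuous functional calculus. -/
noncomputable def oabs {H : Type*} [NormedAddCommGroup H] [InnerProductSpace ℂ H]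
    [CompleteSpace H] (A : H →L[ℂ] H) : H →L[ℂ] H :=
  cfc Real.sqrt (adjoint A * A)

/-- The larger eigenvalue of the real symmetric matrix `!![α, γ; γ, β]`. -/
noncomputable def largerEigenvalue (α β γ : ℝ) : ℝ :=
  (α + β + √((α - β) ^ 2 + 4 * γ ^ 2)) / 2

theorem quadratic_form_le_largerEigenvalue_mul (α β γ a b : ℝ) :
    α * a ^ 2 + 2 * γ * a * b + β * b ^ 2 ≤ largerEigenvalue α β γ * (a ^ 2 + b ^ 2) := by
  have cauchy_schwarz : (α - β) * (a ^ 2 - b ^ 2) + 4 * γ * (a * b) ≤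
      √((α - β) ^ 2 + 4 * γ ^ 2) * (a ^ 2 + b ^ 2) := by
    rw [← Real.sqrt_sq (by positivity : 0 ≤ a ^ 2 + b ^ 2), ← Real.sqrt_mul (by positivity)]
    apply Real.le_sqrt_of_sq_le
    nlinarith [sq_nonneg ((α - β) * (2 * a * b) - 2 * γ * (a ^ 2 - b ^ 2))]
  unfold largerEigenvalue
  linarith

theorem largerEigenvalue_sq_sq_le {p q c : ℝ} (hp : 0 ≤ p) (hq : 0 ≤ q) (hc : 0 ≤ c) :
    largerEigenvalue (p ^ 2) (q ^ 2) c ≤ (1 / 2 * (p + q + √((p - q) ^ 2 + 4 * c))) ^ 2 := by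
  set s := √((p - q) ^ 2 + 4 * c)
  have hs : s ^ 2 = (p - q) ^ 2 + 4 * c := Real.sq_sqrt (by positivity)
  have hs0 : 0 ≤ s := Real.sqrt_nonneg _
  have h_sqrt : √((p ^ 2 - q ^ 2) ^ 2 + 4 * c ^ 2) ≤ 2 * c + (p + q) * s := by
    rw [Real.sqrt_le_iff]
    refine ⟨by positivity, ?_⟩
    nlinarith [mul_nonneg (mul_nonneg hc (add_nonneg hp hq)) hs0, mul_nonneg hc (sq_nonneg (p + q))]
  unfold largerEigenvalue
  nlinarith

theorem le_of_sq_le_mul {t r : ℝ} (hr : 0 ≤ r) (h : t ^ 2 ≤ r * t) : t ≤ r := by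
  nlinarith

section CStarRing

variable {R : Type*} [NonUnitalNormedRing R] [StarRing R] [CStarRing R]

theorem norm_mul_eq_of_star_mul_self_eq {a a' : R} (h : star a * a = star a' * a') (b : R) :
    ‖a * b‖ = ‖a' * b‖ := by
  have h_expand : ∀ c : R, star (c * b) * (c * b) = star b * (star c * c) * b := fun c => by
    simp only [star_mul, mul_assoc]
  have hsq : ‖a * b‖ * ‖a * b‖ = ‖a' * b‖ * ‖a' * b‖ := by
    rw [← CStarRing.norm_star_mul_self, ← CStarRing.norm_star_mul_self, h_expand, h_expand, h]
  exact (mul_self_inj (norm_nonneg _) (norm_nonneg _)).mp hsq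

theorem norm_mul_eq_of_mul_star_self_eq {a a' : R} (h : a * star a = a' * star a') (b : R) :
    ‖b * a‖ = ‖b * a'‖ := by
  rw [← norm_star (b * a), ← norm_star (b * a'), star_mul, star_mul]
  exact norm_mul_eq_of_star_mul_self_eq (by simpa only [star_star] using h) _

end CStarRing

theorem norm_mul_star_eq_norm_abs_mul_abs {A : Type*} [NonUnitalCStarAlgebra A] [PartialOrder A]
    [StarOrderedRing A] (a b : A) : ‖a * star b‖ = ‖CFC.abs a * CFC.abs b‖ := by
  have h_abs : ∀ c : A, star (CFC.abs c) * CFC.abs c = star c * c := fun c => by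
    rw [(CFC.abs_nonneg c).isSelfAdjoint.star_eq, CFC.abs_mul_abs]
  calc ‖a * star b‖ = ‖CFC.abs a * star b‖ := norm_mul_eq_of_star_mul_self_eq (h_abs a).symm _
    _ = ‖CFC.abs a * CFC.abs b‖ := norm_mul_eq_of_mul_star_self_eq (by
        rw [star_star, ← h_abs b, (CFC.abs_nonneg b).isSelfAdjoint.star_eq]) _

section

variable {H : Type*} [NormedAddCommGroup H] [InnerProductSpace ℂ H] [CompleteSpace H]

theorem oabs_eq_cfcAbs (A : H →L[ℂ] H) : oabs A = CFC.abs A := by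
  rw [oabs, CFC.abs, CFC.sqrt_eq_real_sqrt _ (star_mul_self_nonneg A), cfcₙ_eq_cfc,
    star_eq_adjoint]

theorem norm_mul_adjoint_eq_norm_oabs_mul_oabs (A B : H →L[ℂ] H) :
    ‖A * adjoint B‖ = ‖oabs A * oabs B‖ := by
  rw [oabs_eq_cfcAbs, oabs_eq_cfcAbs, ← star_eq_adjoint, norm_mul_star_eq_norm_abs_mul_abs]

theorem sq_norm_inner_cartesian {A P Q : H →L[ℂ] H} (hP : IsSelfAdjoint P)
    (hQ : IsSelfAdjoint Q) (hA : A = P + Complex.I • Q) (x : H) :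
    ‖⟪A x, x⟫_ℂ‖ ^ 2 = ‖⟪P x, x⟫_ℂ‖ ^ 2 + ‖⟪Q x, x⟫_ℂ‖ ^ 2 := by
  rw [hA, add_apply, smul_apply, inner_add_left, inner_smul_left,
    ← hP.isSymmetric.coe_reApplyInnerSelf_apply, ← hQ.isSymmetric.coe_reApplyInnerSelf_apply]
  simp [Complex.sq_norm, Complex.normSq_apply, ← sq]

theorem sq_norm_inner_apply_self_le {A P Q : H →L[ℂ] H} (hP : IsSelfAdjoint P)
    (hQ : IsSelfAdjoint Q) (hA : A = P + Complex.I • Q) (x : H) :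
    ‖⟪A x, x⟫_ℂ‖ ^ 2 ≤ (‖P x‖ ^ 2 + ‖Q x‖ ^ 2) * ‖x‖ ^ 2 := by
  rw [sq_norm_inner_cartesian hP hQ hA, add_mul, ← mul_pow, ← mul_pow]
  gcongr <;> exact norm_inner_le_norm _ _

theorem sq_norm_add_sq_norm_le (P Q : H →L[ℂ] H) (x : H) :
    ‖P x‖ ^ 2 + ‖Q x‖ ^ 2 ≤ ‖(adjoint P * P + adjoint Q * Q) x‖ * ‖x‖ :=
  calc ‖P x‖ ^ 2 + ‖Q x‖ ^ 2
        = RCLike.re ⟪(adjoint P * P + adjoint Q * Q) x, x⟫_ℂ := by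
        rw [apply_norm_sq_eq_inner_adjoint_left, apply_norm_sq_eq_inner_adjoint_left, add_apply,
          inner_add_left, map_add]
        rfl
    _ ≤ ‖⟪(adjoint P * P + adjoint Q * Q) x, x⟫_ℂ‖ := RCLike.re_le_norm _
    _ ≤ ‖(adjoint P * P + adjoint Q * Q) x‖ * ‖x‖ := norm_inner_le_norm _ _

theorem sq_norm_adjoint_mul_self_add_apply_le (P Q : H →L[ℂ] H) (x : H) :
    ‖(adjoint P * P + adjoint Q * Q) x‖ ^ 2 ≤
      ‖P‖ ^ 2 * ‖P x‖ ^ 2 + 2 * ‖P * adjoint Q‖ * ‖P x‖ * ‖Q x‖ + ‖Q‖ ^ 2 * ‖Q x‖ ^ 2 := by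
  have hP : ‖adjoint P (P x)‖ ≤ ‖P‖ * ‖P x‖ :=
    ((adjoint P).le_opNorm _).trans_eq (by rw [LinearIsometryEquiv.norm_map])
  have hQ : ‖adjoint Q (Q x)‖ ≤ ‖Q‖ * ‖Q x‖ :=
    ((adjoint Q).le_opNorm _).trans_eq (by rw [LinearIsometryEquiv.norm_map])
  have cross : RCLike.re ⟪adjoint P (P x), adjoint Q (Q x)⟫_ℂ ≤
      ‖P * adjoint Q‖ * ‖P x‖ * ‖Q x‖ :=
    calc RCLike.re ⟪adjoint P (P x), adjoint Q (Q x)⟫_ℂ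
        ≤ ‖⟪P x, (P * adjoint Q) (Q x)⟫_ℂ‖ := by
          rw [adjoint_inner_left]; exact RCLike.re_le_norm _
      _ ≤ ‖P x‖ * (‖P * adjoint Q‖ * ‖Q x‖) :=
          (norm_inner_le_norm _ _).trans (by gcongr; exact le_opNorm _ _)
      _ = ‖P * adjoint Q‖ * ‖P x‖ * ‖Q x‖ := by ring
  calc ‖(adjoint P * P + adjoint Q * Q) x‖ ^ 2
      = ‖adjoint P (P x)‖ ^ 2 + 2 * RCLike.re ⟪adjoint P (P x), adjoint Q (Q x)⟫_ℂ
          + ‖adjoint Q (Q x)‖ ^ 2 := norm_add_sq _ _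
    _ ≤ (‖P‖ * ‖P x‖) ^ 2 + 2 * (‖P * adjoint Q‖ * ‖P x‖ * ‖Q x‖)
          + (‖Q‖ * ‖Q x‖) ^ 2 := by gcongr
    _ = _ := by ring

end

theorem stmt19 {H : Type*} [NormedAddCommGroup H] [InnerProductSpace ℂ H] [CompleteSpace H]
    (A P Q : H →L[ℂ] H) (hP : IsSelfAdjoint P) (hQ : IsSelfAdjoint Q)
    (hA : A = P + Complex.I • Q)
    (x : H) (hx : ‖x‖ = 1) :
    ‖⟪A x, x⟫_ℂ‖ ≤
      1 / 2 * (‖P‖ + ‖Q‖ +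
        Real.sqrt ((‖P‖ - ‖Q‖) ^ 2 + 4 * ‖oabs P * oabs Q‖)) := by
  rw [← norm_mul_adjoint_eq_norm_oabs_mul_oabs]
  set t := ‖P x‖ ^ 2 + ‖Q x‖ ^ 2
  have h_inner : ‖⟪A x, x⟫_ℂ‖ ^ 2 ≤ t := by
    simpa [hx] using sq_norm_inner_apply_self_le hP hQ hA x
  have h_quadratic : t ^ 2 ≤
      ‖P‖ ^ 2 * ‖P x‖ ^ 2 + 2 * ‖P * adjoint Q‖ * ‖P x‖ * ‖Q x‖ + ‖Q‖ ^ 2 * ‖Q x‖ ^ 2 :=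
    (pow_le_pow_left₀ (by positivity) (by simpa [hx] using sq_norm_add_sq_norm_le P Q x) 2).trans
      (sq_norm_adjoint_mul_self_add_apply_le P Q x)
  have h_eigen := (quadratic_form_le_largerEigenvalue_mul _ _ _ (‖P x‖) (‖Q x‖)).trans
    (mul_le_mul_of_nonneg_right (largerEigenvalue_sq_sq_le (norm_nonneg P) (norm_nonneg Q)
      (norm_nonneg (P * adjoint Q))) (by positivity))
  have h_t : t ≤ (1 / 2 * (‖P‖ + ‖Q‖ + √((‖P‖ - ‖Q‖) ^ 2 + 4 * ‖P * adjoint Q‖))) ^ 2 :=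
    le_of_sq_le_mul (by positivity) (h_quadratic.trans h_eigen)
  exact le_of_sq_le_sq (h_inner.trans h_t) (by positivity)
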